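/- arXiv:1403.5352 — 2 statements merged into one kernel-verified Lean document; each statement's English description precedes it below -/
import Mathlib

section
/- Let R = A·Λ·Aᴴ + σ²·I_M where A ∈ ℂ^(M×n) has full column rank, Λ ∈ ℂ^(n×n) is diagonal with strictly positive diagonal entries, and σ² > 0. If E_s ∈ ℂ^(M×n) consists of orthonormal eigenvectors of R corresponding to the n eigenvalues larger than σ², then the column space of E_s equals the column space of A; equivalently, there exists an invertible matrix T ∈ ℂ^(n×n) with A = E_s·T. -/
/-!
Every signal eigenvector `e` of `R = A Λ Aᴴ + σ² I` satisfies `A (Λ Aᴴ e) = (μ - σ²) e` with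
`μ - σ² ≠ 0`, so `e` lies in the column space of `A`; hence `E_s = A S` for a square `S`.
Since `(A S)ᴴ (A S) = E_sᴴ E_s = 1`, the determinant of `S` is a unit, and `A = E_s S⁻¹`.
-/

open Matrix

namespace Matrix

variable {m n p R K : Type*} [Fintype m] [Fintype n] [Fintype p] [DecidableEq p]

theorem mul_eq_mul_diagonal_of_mulVec_eq [CommSemiring R] (B : Matrix m m R)
    (E : Matrix m p R) (μ : p → R)
    (h : ∀ j, B *ᵥ (fun i => E i j) = fun i => μ j * E i j) :
    B * E = E * diagonal μ := by
  ext i j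
  rw [mul_diagonal, mul_comm, ← congrFun (h j) i]
  rfl

theorem mul_eq_mul_diagonal_sub_of_add_smul_one_mulVec_eq [CommRing R] [DecidableEq m]
    (B : Matrix m m R) (c : R) (E : Matrix m p R) (μ : p → R)
    (h : ∀ j, (B + c • 1) *ᵥ (fun i => E i j) = fun i => μ j * E i j) :
    B * E = E * diagonal (fun j => μ j - c) := by
  have hE := mul_eq_mul_diagonal_of_mulVec_eq _ _ _ h
  rw [Matrix.add_mul, smul_mul, Matrix.one_mul] at hE
  rw [eq_sub_of_add_eq hE]
  ext i j
  simp [mul_diagonal, mul_sub, mul_comm c]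

theorem exists_eq_mul_of_mul_mul_eq_mul_diagonal [Field K] (A : Matrix m n K)
    (C : Matrix n m K) (E : Matrix m p K) (d : p → K) (hd : ∀ j, d j ≠ 0)
    (h : A * C * E = E * diagonal d) :
    ∃ S : Matrix n p K, E = A * S := by
  refine ⟨C * E * diagonal d⁻¹, ?_⟩
  rw [← Matrix.mul_assoc, ← Matrix.mul_assoc, h, Matrix.mul_assoc, diagonal_mul_diagonal]
  simp [Pi.inv_apply, mul_inv_cancel₀ (hd _)]

theorem isUnit_det_of_conjTranspose_mul_self_eq_one [CommRing R] [StarRing R] [DecidableEq n]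
    (A : Matrix m n R) (S : Matrix n n R) (h : (A * S)ᴴ * (A * S) = 1) :
    IsUnit S.det := by
  have hdet := congrArg det h
  rw [conjTranspose_mul, Matrix.mul_assoc, ← Matrix.mul_assoc Aᴴ, ← Matrix.mul_assoc, det_mul,
    det_mul, det_one] at hdet
  exact IsUnit.of_mul_eq_one_right _ hdet

end Matrix

theorem stmt4_general (M n : ℕ) (A : Matrix (Fin M) (Fin n) ℂ)
    (Λ : Matrix (Fin n) (Fin n) ℂ)
    (σ2 : ℝ)
    (Es : Matrix (Fin M) (Fin n) ℂ)
    (horth : Esᴴ * Es = 1)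
    (μ : Fin n → ℝ) (hμ : ∀ j, σ2 < μ j)
    (heig : ∀ j, (A * Λ * Aᴴ + (σ2 : ℂ) • (1 : Matrix (Fin M) (Fin M) ℂ)).mulVec
        (fun i => Es i j) = fun i => (μ j : ℂ) * Es i j) :
    ∃ T : Matrix (Fin n) (Fin n) ℂ, IsUnit T.det ∧ A = Es * T := by
  have hgap : ∀ j, (μ j : ℂ) - σ2 ≠ 0 := fun j => by
    exact_mod_cast sub_ne_zero.mpr (hμ j).ne'
  have hsignal := mul_eq_mul_diagonal_sub_of_add_smul_one_mulVec_eq _ _ _ _ heig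
  rw [Matrix.mul_assoc A] at hsignal
  obtain ⟨S, rfl⟩ := exists_eq_mul_of_mul_mul_eq_mul_diagonal _ _ _ _ hgap hsignal
  have hS := isUnit_det_of_conjTranspose_mul_self_eq_one A S horth
  refine ⟨S⁻¹, isUnit_nonsing_inv_det S hS, ?_⟩
  rw [Matrix.mul_assoc, mul_nonsing_inv S hS, Matrix.mul_one]

theorem stmt4 (M n : ℕ) (A : Matrix (Fin M) (Fin n) ℂ) (hA : A.rank = n)
    (Λ : Matrix (Fin n) (Fin n) ℂ)
    (hdiag : ∀ i j, i ≠ j → Λ i j = 0)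
    (hpos : ∀ i, 0 < (Λ i i).re ∧ (Λ i i).im = 0)
    (σ2 : ℝ) (hσ : 0 < σ2)
    (Es : Matrix (Fin M) (Fin n) ℂ)
    (horth : Esᴴ * Es = 1)
    (μ : Fin n → ℝ) (hμ : ∀ j, σ2 < μ j)
    (heig : ∀ j, (A * Λ * Aᴴ + (σ2 : ℂ) • (1 : Matrix (Fin M) (Fin M) ℂ)).mulVec
        (fun i => Es i j) = fun i => (μ j : ℂ) * Es i j) :
    ∃ T : Matrix (Fin n) (Fin n) ℂ, IsUnit T.det ∧ A = Es * T :=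
  stmt4_general M n A Λ σ2 Es horth μ hμ heig
end

section
/- Let E₁ ∈ ℂ^(N×n) have full column rank and suppose E₁·Ψ = E₂ for some Ψ ∈ ℂ^(n×n). If, in addition, there exist an invertible T ∈ ℂ^(n×n) and matrices A₁ ∈ ℂ^(N×n), Φ ∈ ℂ^(n×n) with A₁ = E₁·T and A₁·Φ = E₂·T, then Ψ = T·Φ·T⁻¹; in particular Ψ and Φ are similar and have the same eigenvalues (counted with multiplicity). -/
open Matrix Polynomial

lemma left_cancel_of_rank {N n : ℕ} (E1 : Matrix (Fin N) (Fin n) ℂ) (hE1 : E1.rank = n)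
    {M M' : Matrix (Fin n) (Fin n) ℂ} (h : E1 * M = E1 * M') : M = M' := by
  have hinj : Function.Injective E1.mulVecLin := by
    rw [← LinearMap.ker_eq_bot, ← Submodule.finrank_eq_zero]
    have h1 := E1.mulVecLin.finrank_range_add_finrank_ker
    have h2 : Module.finrank ℂ (LinearMap.range E1.mulVecLin) = n := hE1
    have h3 : Module.finrank ℂ (Fin n → ℂ) = n := by simp
    omega
  have hv : ∀ v, M *ᵥ v = M' *ᵥ v := by
    intro v
    apply hinj
    simp only [mulVecLin_apply, mulVec_mulVec, h]
  ext i j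
  have := congrFun (hv (Pi.single j 1)) i
  simpa using this

lemma charpoly_conj_mat {n : ℕ} (Φ T : Matrix (Fin n) (Fin n) ℂ) (hT : IsUnit T.det) :
    (T * Φ * T⁻¹).charpoly = Φ.charpoly := by
  have hTT : T * T⁻¹ = 1 := mul_nonsing_inv T hT
  have hTT' : T⁻¹ * T = 1 := nonsing_inv_mul T hT
  have hmap : T.map (C : ℂ →+* ℂ[X]) * (T⁻¹).map C = 1 := by
    rw [← Matrix.map_mul, hTT, Matrix.map_one _ (map_zero _) (map_one _)]
  have hmap' : (T⁻¹).map (C : ℂ →+* ℂ[X]) * T.map C = 1 := by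
    rw [← Matrix.map_mul, hTT', Matrix.map_one _ (map_zero _) (map_one _)]
  have key : charmatrix (T * Φ * T⁻¹) = T.map C * charmatrix Φ * (T⁻¹).map C := by
    unfold charmatrix
    simp only [RingHom.mapMatrix_apply, Matrix.mul_sub, Matrix.sub_mul, Matrix.map_mul]
    congr 1
    have hc : T.map (C : ℂ →+* ℂ[X]) * Matrix.scalar (Fin n) (X : ℂ[X]) = Matrix.scalar (Fin n) X * T.map C :=
      (Matrix.scalar_commute X (fun r' => Commute.all X r') (T.map C)).symm
    rw [hc, Matrix.mul_assoc, hmap, Matrix.mul_one]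
  rw [Matrix.charpoly, key, Matrix.det_mul, Matrix.det_mul, Matrix.charpoly]
  have : (T.map (C : ℂ →+* ℂ[X])).det * ((T⁻¹).map C).det = 1 := by
    rw [← Matrix.det_mul, hmap, Matrix.det_one]
  ring_nf
  ring_nf at this
  calc (T.map C).det * (charmatrix Φ).det * ((T⁻¹).map C).det
      = (charmatrix Φ).det * ((T.map C).det * ((T⁻¹).map C).det) := by ring
    _ = (charmatrix Φ).det := by rw [this, mul_one]

theorem stmt5 (N n : ℕ) (E1 E2 A1 : Matrix (Fin N) (Fin n) ℂ) (hE1 : E1.rank = n)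
    (Ψ Φ T : Matrix (Fin n) (Fin n) ℂ)
    (hΨ : E1 * Ψ = E2) (hT : IsUnit T.det)
    (hA1 : A1 = E1 * T) (hA2 : A1 * Φ = E2 * T) :
    Ψ = T * Φ * T⁻¹ ∧ Ψ.charpoly = Φ.charpoly := by
  have h1 : E1 * (Ψ * T) = E1 * (T * Φ) := by
    rw [← Matrix.mul_assoc, hΨ, ← Matrix.mul_assoc, ← hA1, hA2]
  have h2 : Ψ * T = T * Φ := left_cancel_of_rank E1 hE1 h1
  have hΨeq : Ψ = T * Φ * T⁻¹ := by
    have := congrArg (· * T⁻¹) h2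
    simpa [Matrix.mul_assoc, mul_nonsing_inv T hT] using this
  exact ⟨hΨeq, by rw [hΨeq, charpoly_conj_mat Φ T hT]⟩
end
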